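/- arXiv:0906.0439 — 2 statements merged into one kernel-verified Lean document; each statement's English description precedes it below -/
import Mathlib

section
/- Let h : ℝ² → ℝ² be a homeomorphism and suppose Franks' lemma holds for free open discs (i.e., for any two open discs D, D' each disjoint from its image under h, the set {n ∈ ℤ : hⁿ(D) ∩ D' ≠ ∅} is an interval of ℤ). Then for any two connected open sets U, V with h(U) ∩ U = ∅ and h(V) ∩ V = ∅, the set {n ∈ ℤ : hⁿ(U) ∩ V ≠ ∅} is an interval of ℤ (i.e., if k < n < m and hᵏ(U) ∩ V ≠ ∅ and hᵐ(U) ∩ V ≠ ∅ then hⁿ(U) ∩ V ≠ ∅). -/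
/-- A set is *free* for `h` if it is disjoint from its image. -/
def IsFree (h : (ℝ × ℝ) ≃ₜ (ℝ × ℝ)) (A : Set (ℝ × ℝ)) : Prop :=
  ⇑h '' A ∩ A = ∅

/-- An *open disc*: an open set homeomorphic (as a subspace) to the open unit disc. -/
def IsOpenDisc (D : Set (ℝ × ℝ)) : Prop :=
  IsOpen D ∧ Nonempty (D ≃ₜ (Metric.ball (0 : ℝ × ℝ) 1))

open Metric Set

noncomputable section


/-- Radial-type push: a homeomorphism of the plane sending `0` to `v` (`‖v‖ < 1`),
fixing the complement of the unit ball and preserving the unit ball. -/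
lemma pushHomeo (v : ℝ × ℝ) (hv : ‖v‖ < 1) :
    ∃ Φ : (ℝ × ℝ) ≃ₜ (ℝ × ℝ), Φ 0 = v ∧ (∀ x, 1 ≤ ‖x‖ → Φ x = x) ∧
      (∀ x, ‖x‖ < 1 → ‖Φ x‖ < 1) := by
  set g : (ℝ × ℝ) → ℝ := fun x => max (1 - ‖x‖) 0 with hgdef
  have hg0 : ∀ x, 0 ≤ g x := fun x => le_max_right _ _
  have hglip : ∀ x y : ℝ × ℝ, |g x - g y| ≤ ‖x - y‖ := by
    intro x y
    calc |g x - g y| ≤ |(1 - ‖x‖) - (1 - ‖y‖)| := abs_max_sub_max_le_abs _ _ _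
      _ = |‖y‖ - ‖x‖| := by ring_nf
      _ ≤ ‖y - x‖ := abs_norm_sub_norm_le _ _
      _ = ‖x - y‖ := norm_sub_rev _ _
  set f : (ℝ × ℝ) → (ℝ × ℝ) := fun x => x + g x • v with hfdef
  have hvpos : (0:ℝ) < 1 - ‖v‖ := by linarith
  have hlow : ∀ x y, (1 - ‖v‖) * ‖x - y‖ ≤ ‖f x - f y‖ := by
    intro x y
    have hfe : f x - f y = (x - y) + (g x - g y) • v := by
      simp only [hfdef, sub_smul]; abel
    have h1 : ‖x - y‖ ≤ ‖f x - f y‖ + ‖(g x - g y) • v‖ := by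
      have : x - y = (f x - f y) - (g x - g y) • v := by rw [hfe]; abel
      rw [this]; exact norm_sub_le _ _
    have h2 : ‖(g x - g y) • v‖ ≤ ‖x - y‖ * ‖v‖ := by
      rw [norm_smul, Real.norm_eq_abs]
      exact mul_le_mul_of_nonneg_right (hglip x y) (norm_nonneg v)
    nlinarith [norm_nonneg (x - y), norm_nonneg v]
  have hinj : Function.Injective f := by
    intro x y hxy
    have := hlow x y
    rw [hxy, sub_self, norm_zero] at this
    have : ‖x - y‖ ≤ 0 := by nlinarith [norm_nonneg (x - y)]
    have := le_antisymm this (norm_nonneg _)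
    rwa [norm_sub_eq_zero_iff] at this
  have hsurj : Function.Surjective f := by
    intro z
    set F : (ℝ × ℝ) → (ℝ × ℝ) := fun x => z - g x • v with hFdef
    have hlip : LipschitzWith ‖v‖₊ F := by
      apply LipschitzWith.of_dist_le_mul
      intro x y
      have : F x - F y = (g y - g x) • v := by
        simp only [hFdef, sub_smul]; abel
      rw [dist_eq_norm, dist_eq_norm, this, norm_smul, Real.norm_eq_abs, coe_nnnorm,
        abs_sub_comm, mul_comm ‖v‖]
      exact mul_le_mul_of_nonneg_right (hglip x y) (norm_nonneg v)
    have hc : ContractingWith ‖v‖₊ F := ⟨by exact_mod_cast hv, hlip⟩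
    obtain ⟨x, hx, -⟩ := hc.exists_fixedPoint z (edist_ne_top _ _)
    refine ⟨x, ?_⟩
    have : z - g x • v = x := hx
    show x + g x • v = z
    exact (sub_eq_iff_eq_add.mp this).symm
  have hcontf : Continuous f := by
    apply continuous_id.add
    exact (((continuous_const.sub continuous_norm).max continuous_const).smul continuous_const)
  set e : (ℝ × ℝ) ≃ (ℝ × ℝ) := Equiv.ofBijective f ⟨hinj, hsurj⟩ with hedef
  have hes : ∀ y, f (e.symm y) = y := fun y => e.apply_symm_apply y
  have hcontsymm : Continuous e.symm := by
    refine LipschitzWith.continuous (K := ⟨(1 - ‖v‖)⁻¹, by positivity⟩) ?_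
    apply LipschitzWith.of_dist_le_mul
    intro a b
    have := hlow (e.symm a) (e.symm b)
    rw [hes, hes] at this
    rw [dist_eq_norm, dist_eq_norm]
    show ‖e.symm a - e.symm b‖ ≤ (1 - ‖v‖)⁻¹ * ‖a - b‖; rw [le_inv_mul_iff₀ hvpos]
    exact this
  refine ⟨⟨e, hcontf, hcontsymm⟩, ?_, ?_, ?_⟩
  · show f 0 = v
    simp [hfdef, hgdef]
  · intro x hx
    show f x = x
    have : g x = 0 := max_eq_right (by linarith)
    simp [hfdef, this]
  · intro x hx
    show ‖f x‖ < 1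
    have hgx : g x = 1 - ‖x‖ := max_eq_left (by linarith)
    calc ‖f x‖ ≤ ‖x‖ + ‖g x • v‖ := norm_add_le _ _
      _ = ‖x‖ + (1 - ‖x‖) * ‖v‖ := by
          rw [norm_smul, Real.norm_eq_abs, hgx, abs_of_pos (by linarith)]
      _ < ‖x‖ + (1 - ‖x‖) := by
          have := mul_lt_of_lt_one_right (show (0:ℝ) < 1 - ‖x‖ by linarith) hv
          linarith
      _ = 1 := by ring
/-- Push any interior point of the unit ball to any other, fixing the complement. -/
lemma pushBall (p q : ℝ × ℝ) (hp : ‖p‖ < 1) (hq : ‖q‖ < 1) :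
    ∃ Φ : (ℝ × ℝ) ≃ₜ (ℝ × ℝ), Φ p = q ∧ (∀ x, 1 ≤ ‖x‖ → Φ x = x) ∧
      (∀ x, ‖x‖ < 1 → ‖Φ x‖ < 1) := by
  obtain ⟨P, hP0, hPout, hPin⟩ := pushHomeo p hp
  obtain ⟨Q, hQ0, hQout, hQin⟩ := pushHomeo q hq
  refine ⟨P.symm.trans Q, ?_, ?_, ?_⟩
  · show Q (P.symm p) = q
    have : P.symm p = 0 := by
      apply P.injective; rw [Homeomorph.apply_symm_apply, hP0]
    rw [this, hQ0]
  · intro x hx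
    show Q (P.symm x) = x
    have h1 : P.symm x = x := by
      apply P.injective; rw [Homeomorph.apply_symm_apply, hPout x hx]
    rw [h1, hQout x hx]
  · intro x hx
    show ‖Q (P.symm x)‖ < 1
    have h1 : ‖P.symm x‖ < 1 := by
      by_contra hcon
      push_neg at hcon
      have := hPout _ hcon
      rw [Homeomorph.apply_symm_apply] at this
      rw [← this] at hcon
      linarith
    exact hQin _ h1

/-- The affine homeomorphism `x ↦ c + r • x`. -/
def affH (c : ℝ × ℝ) (r : ℝ) (hr : r ≠ 0) : (ℝ × ℝ) ≃ₜ (ℝ × ℝ) :=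
  (Homeomorph.smulOfNeZero r hr).trans (Homeomorph.addLeft c)

lemma affH_apply (c : ℝ × ℝ) (r : ℝ) (hr : r ≠ 0) (x : ℝ × ℝ) :
    affH c r hr x = c + r • x := rfl

lemma affH_symm_apply (c : ℝ × ℝ) (r : ℝ) (hr : r ≠ 0) (x : ℝ × ℝ) :
    (affH c r hr).symm x = r⁻¹ • (-c + x) := rfl

lemma norm_affH_symm (c : ℝ × ℝ) (r : ℝ) (hr : 0 < r) (x : ℝ × ℝ) :
    ‖(affH c r hr.ne').symm x‖ < 1 ↔ x ∈ ball c r := by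
  rw [affH_symm_apply, norm_smul, Real.norm_eq_abs, abs_inv, abs_of_pos hr, mem_ball,
    dist_eq_norm, inv_mul_lt_iff₀ hr, mul_one]
  constructor <;> intro h <;> [skip; skip] <;>
    · have : -c + x = x - c := by abel
      first
        | (rw [this] at h; exact h)
        | (rw [show x - c = -c + x by abel] at h; exact h)

/-- Push any point of a ball to any other point of the ball, by a homeomorphism of the
plane which is the identity outside the ball and preserves the ball. -/
lemma pushInBall (c : ℝ × ℝ) (r : ℝ) (hr : 0 < r) (p q : ℝ × ℝ)
    (hp : p ∈ ball c r) (hq : q ∈ ball c r) :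
    ∃ Φ : (ℝ × ℝ) ≃ₜ (ℝ × ℝ), Φ p = q ∧ (∀ x, x ∉ ball c r → Φ x = x) ∧
      (∀ x, x ∈ ball c r → Φ x ∈ ball c r) := by
  set A := affH c r hr.ne' with hA
  have hmem : ∀ x, ‖A.symm x‖ < 1 ↔ x ∈ ball c r := norm_affH_symm c r hr
  obtain ⟨Ψ, hΨpq, hΨout, hΨin⟩ :=
    pushBall (A.symm p) (A.symm q) ((hmem p).mpr hp) ((hmem q).mpr hq)
  refine ⟨(A.symm.trans Ψ).trans A, ?_, ?_, ?_⟩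
  · show A (Ψ (A.symm p)) = q
    rw [hΨpq, Homeomorph.apply_symm_apply]
  · intro x hx
    show A (Ψ (A.symm x)) = x
    have : 1 ≤ ‖A.symm x‖ := by
      by_contra hcon; push_neg at hcon; exact hx ((hmem x).mp hcon)
    rw [hΨout _ this, Homeomorph.apply_symm_apply]
  · intro x hx
    show A (Ψ (A.symm x)) ∈ ball c r
    have h1 : ‖Ψ (A.symm x)‖ < 1 := hΨin _ ((hmem x).mpr hx)
    have h2 : A.symm (A (Ψ (A.symm x))) = Ψ (A.symm x) := A.symm_apply_apply _
    rw [← hmem, h2]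
    exact h1

/-- Balls are open discs. -/
lemma isOpenDisc_ball (c : ℝ × ℝ) (r : ℝ) (hr : 0 < r) : IsOpenDisc (ball c r) := by
  refine ⟨isOpen_ball, ⟨?_⟩⟩
  set A := affH c r hr.ne' with hA
  have himg : A '' ball 0 1 = ball c r := by
    ext x
    constructor
    · rintro ⟨y, hy, rfl⟩
      have : A.symm (A y) = y := A.symm_apply_apply y
      rw [← norm_affH_symm c r hr, this]
      simpa [dist_eq_norm] using hy
    · intro hx
      refine ⟨A.symm x, ?_, A.apply_symm_apply x⟩
      have := (norm_affH_symm c r hr x).mpr hx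
      simpa [dist_eq_norm] using this
  exact (Homeomorph.setCongr himg.symm).trans (A.image (ball 0 1)).symm

lemma IsOpenDisc.image (Φ : (ℝ × ℝ) ≃ₜ (ℝ × ℝ)) {D : Set (ℝ × ℝ)} (hD : IsOpenDisc D) :
    IsOpenDisc (Φ '' D) :=
  ⟨Φ.isOpenMap D hD.1, ⟨((Φ.image D).symm.trans hD.2.some)⟩⟩

/-- Given a chain of points, the first within `3ε` of `a`, later ones at distance `≥ 2ε`
from `a`, with consecutive distances `< 2ε` and all relevant balls inside `U`, there is an
open disc inside `U` containing both `a` and the last chain point. -/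
lemma chainDisc (U : Set (ℝ × ℝ)) (a : ℝ × ℝ) (ε : ℝ) (hε : 0 < ε) (q : ℕ → ℝ × ℝ)
    (hball0 : ball a (3 * ε) ⊆ U) (hq1 : dist (q 1) a < 3 * ε) :
    ∀ M : ℕ, 1 ≤ M →
    (∀ i, 1 ≤ i → i < M → ball (q i) (2 * ε) ⊆ U) →
    (∀ i, 1 ≤ i → i < M → 2 * ε ≤ dist (q i) a) →
    (∀ i, 1 ≤ i → i < M → dist (q (i + 1)) (q i) < 2 * ε) →
    ∃ D : Set (ℝ × ℝ), IsOpenDisc D ∧ a ∈ D ∧ q M ∈ D ∧ D ⊆ U := by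
  intro M hM
  induction M, hM using Nat.le_induction with
  | base =>
    intro _ _ _
    exact ⟨ball a (3 * ε), isOpenDisc_ball a _ (by linarith), mem_ball_self (by linarith),
      by simpa [mem_ball] using hq1, hball0⟩
  | succ M hM ih =>
    intro hsupp hfar hstep
    obtain ⟨D, hDdisc, haD, hqD, hDU⟩ := ih
      (fun i h1 h2 => hsupp i h1 (Nat.lt_succ_of_lt h2))
      (fun i h1 h2 => hfar i h1 (Nat.lt_succ_of_lt h2))
      (fun i h1 h2 => hstep i h1 (Nat.lt_succ_of_lt h2))
    obtain ⟨Φ, hΦpq, hΦout, hΦin⟩ := pushInBall (q M) (2 * ε) (by linarith) (q M) (q (M + 1))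
      (mem_ball_self (by linarith)) (by simpa [mem_ball] using hstep M hM (Nat.lt_succ_self M))
    refine ⟨Φ '' D, hDdisc.image Φ, ?_, ?_, ?_⟩
    · have ha : a ∉ ball (q M) (2 * ε) := by
        have := hfar M hM (Nat.lt_succ_self M)
        simp only [mem_ball, not_lt]
        rw [dist_comm]
        exact this
      exact ⟨a, haD, hΦout a ha⟩
    · exact ⟨q M, hqD, hΦpq⟩
    · rintro y ⟨x, hxD, rfl⟩
      by_cases hx : x ∈ ball (q M) (2 * ε)
      · exact hsupp M hM (Nat.lt_succ_self M) (hΦin x hx)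
      · rw [hΦout x hx]
        exact hDU hxD

/-- Any two points of an open connected subset of the plane lie in a common open disc
contained in the set. -/
lemma exists_disc {U : Set (ℝ × ℝ)} (hUo : IsOpen U) (hUc : IsConnected U)
    {a b : ℝ × ℝ} (ha : a ∈ U) (hb : b ∈ U) :
    ∃ D : Set (ℝ × ℝ), IsOpenDisc D ∧ a ∈ D ∧ b ∈ D ∧ D ⊆ U := by
  classical
  have hpc : IsPathConnected U := hUo.isConnected_iff_isPathConnected.mp hUc
  have hjoin : JoinedIn U a b := hpc.joinedIn a ha b hb
  set γ : Path a b := hjoin.somePath with hγdef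
  have hγU : ∀ t, γ t ∈ U := hjoin.somePath_mem
  have hK : IsCompact (Set.range γ) := isCompact_range γ.continuous
  have hKU : Set.range γ ⊆ U := by rintro x ⟨t, rfl⟩; exact hγU t
  obtain ⟨δ, hδ0, hδU⟩ := hK.exists_thickening_subset_open hUo hKU
  set ε : ℝ := δ / 4 with hεdef
  have hε0 : 0 < ε := by positivity
  -- any ball of radius ≤ 3ε around a path point is in U
  have hballU : ∀ t : unitInterval, ball (γ t) (3 * ε) ⊆ U := by
    intro t y hy
    apply hδU
    rw [Metric.mem_thickening_iff]
    exact ⟨γ t, ⟨t, rfl⟩, by rw [mem_ball] at hy; linarith [hy]⟩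
  -- uniform continuity
  have hucont : UniformContinuous γ := CompactSpace.uniformContinuous_of_continuous γ.continuous
  obtain ⟨δ', hδ'0, hδ'⟩ := Metric.uniformContinuous_iff.mp hucont ε hε0
  obtain ⟨N₀, hN₀⟩ := exists_nat_gt (1 / δ')
  set N : ℕ := max N₀ 1 with hNdef
  have hN1 : 1 ≤ N := le_max_right _ _
  have hNpos : (0:ℝ) < N := by exact_mod_cast Nat.lt_of_lt_of_le Nat.zero_lt_one hN1
  have hNδ' : 1 / (N:ℝ) < δ' := by
    have h1 : 1 / δ' < (N₀:ℝ) := hN₀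
    have h2 : (N₀:ℝ) ≤ N := by exact_mod_cast le_max_left _ _
    rw [div_lt_iff₀ hNpos]
    rw [div_lt_iff₀ hδ'0] at h1
    nlinarith
  set s : ℕ → unitInterval := fun i => Set.projIcc 0 1 zero_le_one ((i:ℝ) / N) with hsdef
  set p : ℕ → ℝ × ℝ := fun i => γ (s i) with hpdef
  have hp0 : p 0 = a := by
    have : s 0 = 0 := by
      simp only [hsdef, Nat.cast_zero, zero_div]
      exact Set.projIcc_left _
    rw [hpdef]; simp only [this]; exact γ.source
  have hpN : p N = b := by
    have : s N = 1 := by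
      simp only [hsdef]
      rw [div_self hNpos.ne']
      exact Set.projIcc_right _
    rw [hpdef]; simp only [this]; exact γ.target
  have hchain : ∀ i, dist (p (i + 1)) (p i) < ε := by
    intro i
    apply hδ'
    have hlip : dist (s (i+1)) (s i) ≤ dist (((i:ℝ)+1)/N) ((i:ℝ)/N) := by
      have := (LipschitzWith.projIcc (zero_le_one' ℝ)).dist_le_mul
        (((i:ℝ)+1)/N) ((i:ℝ)/N)
      simpa [hsdef, Nat.cast_succ] using this
    have : dist (((i:ℝ)+1)/N) ((i:ℝ)/N) = 1 / N := by
      rw [Real.dist_eq, div_sub_div_same]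
      rw [show (i:ℝ) + 1 - i = 1 by ring]
      rw [abs_of_pos (by positivity)]
    calc dist (s (i+1)) (s i) ≤ 1/N := by rw [← this]; exact hlip
      _ < δ' := hNδ'
  -- greatest index whose point is within 2ε of a
  set P : ℕ → Prop := fun i => dist (p i) a < 2 * ε with hPdef
  set j : ℕ := Nat.findGreatest P N with hjdef
  have hP0 : P 0 := by simp [hPdef, hp0]; positivity
  have hPj : P j := Nat.findGreatest_spec (Nat.zero_le N) hP0
  have hjN : j ≤ N := Nat.findGreatest_le N
  by_cases hcase : j = N
  · -- b is already close to a
    refine ⟨ball a (3 * ε), isOpenDisc_ball a _ (by linarith), mem_ball_self (by linarith),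
      ?_, ?_⟩
    · rw [mem_ball]
      have hthis := hPj
      rw [hcase] at hthis
      simp only [hPdef] at hthis
      rw [hpN] at hthis
      linarith
    · have h0 := hballU 0
      rw [γ.source] at h0
      exact h0
  · have hjltN : j < N := lt_of_le_of_ne hjN hcase
    set M : ℕ := N - j with hMdef
    have hM1 : 1 ≤ M := Nat.le_sub_of_add_le (by omega)
    set q : ℕ → ℝ × ℝ := fun i => p (j + i) with hqdef
    have hjM : j + M = N := by rw [hMdef]; omega
    have hqM : q M = b := by show p (j + M) = b; rw [hjM, hpN]
    have hmax : ∀ i, j < i → i ≤ N → 2 * ε ≤ dist (p i) a := by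
      intro i h1 h2
      by_contra hcon
      push_neg at hcon
      exact Nat.findGreatest_is_greatest h1 h2 hcon
    obtain ⟨D, hD, haD, hbD, hDU⟩ := chainDisc U a ε hε0 q
      (by
        have h0 := hballU (s 0)
        have hγs0 : γ (s 0) = a := hp0
        rw [hγs0] at h0
        exact h0)
      (by
        calc dist (q 1) a ≤ dist (p (j+1)) (p j) + dist (p j) a := dist_triangle _ _ _
          _ < ε + 2 * ε := add_lt_add (hchain j) hPj
          _ = 3 * ε := by ring)
      M hM1
      (fun i h1 h2 => by
        intro y hy
        apply hballU (s (j + i))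
        rw [mem_ball] at *
        calc dist y (γ (s (j+i))) = dist y (q i) := rfl
          _ < 2 * ε := hy
          _ < 3 * ε := by linarith)
      (fun i h1 h2 => hmax (j + i) (by omega) (by omega))
      (fun i h1 h2 => by
        calc dist (q (i+1)) (q i) = dist (p (j + i + 1)) (p (j + i)) := by
              show dist (p (j + (i+1))) (p (j + i)) = _
              rw [← Nat.add_assoc]
          _ < ε := hchain (j + i)
          _ < 2 * ε := by linarith)
    exact ⟨D, hD, haD, by rwa [hqM] at hbD, hDU⟩

lemma IsFree.mono (h : (ℝ × ℝ) ≃ₜ (ℝ × ℝ)) {A D : Set (ℝ × ℝ)} (hD : D ⊆ A)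
    (hA : IsFree h A) : IsFree h A → IsFree h D := by
  intro _
  rw [IsFree, ← Set.subset_empty_iff] at *
  exact fun x hx => hA ⟨Set.image_mono hD hx.1, hD hx.2⟩

/-- Lemma 1.1: Franks' lemma for free open discs implies the interval property for
free connected open sets. -/
theorem freeSetLemma_of_franks (h : (ℝ × ℝ) ≃ₜ (ℝ × ℝ))
    (hFranks : ∀ D D' : Set (ℝ × ℝ), IsOpenDisc D → IsOpenDisc D' →
      IsFree h D → IsFree h D' →
      ∀ k n m : ℤ, k < n → n < m →
        (⇑(h.toEquiv ^ k) '' D ∩ D').Nonempty →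
        (⇑(h.toEquiv ^ m) '' D ∩ D').Nonempty →
        (⇑(h.toEquiv ^ n) '' D ∩ D').Nonempty) :
    ∀ U V : Set (ℝ × ℝ), IsOpen U → IsConnected U → IsOpen V → IsConnected V →
      IsFree h U → IsFree h V →
      ∀ k n m : ℤ, k < n → n < m →
        (⇑(h.toEquiv ^ k) '' U ∩ V).Nonempty →
        (⇑(h.toEquiv ^ m) '' U ∩ V).Nonempty →
        (⇑(h.toEquiv ^ n) '' U ∩ V).Nonempty := by
  intro U V hUo hUc hVo hVc hUf hVf k n m hkn hnm hk hm
  obtain ⟨x, hxU, hxV⟩ := hk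
  obtain ⟨u₁, hu₁, rfl⟩ := hxU
  obtain ⟨y, hyU, hyV⟩ := hm
  obtain ⟨u₂, hu₂, rfl⟩ := hyU
  obtain ⟨D, hDdisc, hu₁D, hu₂D, hDU⟩ := exists_disc hUo hUc hu₁ hu₂
  obtain ⟨D', hD'disc, hxD', hyD', hD'V⟩ := exists_disc hVo hVc hxV hyV
  have hDf : IsFree h D := IsFree.mono h hDU hUf hUf
  have hD'f : IsFree h D' := IsFree.mono h hD'V hVf hVf
  have hres := hFranks D D' hDdisc hD'disc hDf hD'f k n m hkn hnm
    ⟨_, ⟨u₁, hu₁D, rfl⟩, hxD'⟩ ⟨_, ⟨u₂, hu₂D, rfl⟩, hyD'⟩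
  obtain ⟨z, hz1, hz2⟩ := hres
  exact ⟨z, Set.image_mono hDU hz1, hD'V hz2⟩

end
end

section
/- Let W be a closed subset of ℝ² such that W ∪ {∞} is connected in the one-point compactification S² of ℝ². Then every compactly connected component of W is unbounded. -/
open OnePoint

/-- A subset Z of X is compactly connected if any two of its points lie in a
common compact connected subset of Z. -/
def CompactlyConnected {X : Type*} [TopologicalSpace X] (Z : Set X) : Prop :=
  ∀ x ∈ Z, ∀ y ∈ Z, ∃ K : Set X, K ⊆ Z ∧ IsCompact K ∧ IsConnected K ∧ x ∈ K ∧ y ∈ K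

/-- In a compact Hausdorff space, the connected component of a point can be
separated from any disjoint closed set by a clopen set. -/
lemma exists_isClopen_superset_connectedComponent_disjoint
    {X : Type*} [TopologicalSpace X] [T2Space X] [CompactSpace X]
    (x : X) {B : Set X} (hB : IsClosed B) (hdisj : Disjoint (connectedComponent x) B) :
    ∃ V : Set X, IsClopen V ∧ connectedComponent x ⊆ V ∧ Disjoint V B := by
  have hBc : IsCompact B := hB.isCompact
  have hcover : B ⊆ ⋃ Z : {Z : Set X // IsClopen Z ∧ x ∈ Z}, (Z : Set X)ᶜ := by
    intro b hb
    by_contra h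
    simp only [Set.mem_iUnion, Set.mem_compl_iff, not_exists, not_not] at h
    have hbc : b ∈ connectedComponent x := by
      rw [connectedComponent_eq_iInter_isClopen x]
      exact Set.mem_iInter.2 fun Z => h Z
    exact hdisj.ne_of_mem hbc hb rfl
  obtain ⟨t, ht⟩ := hBc.elim_finite_subcover _ (fun Z => Z.2.1.compl.isOpen) hcover
  refine ⟨⋂ Z ∈ t, (Z : Set X), isClopen_biInter_finset fun Z _ => Z.2.1, ?_, ?_⟩
  · exact Set.subset_iInter₂ fun Z _ => Z.2.1.connectedComponent_subset Z.2.2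
  · rw [Set.disjoint_left]
    intro b hbV hbB
    obtain ⟨Z, hZt, hZ⟩ := Set.mem_iUnion₂.1 (ht hbB)
    exact hZ (Set.mem_iInter₂.1 hbV Z hZt)

/-- Lemma 2.2: if W is closed in the plane and W ∪ {∞} is connected in the
one-point compactification, then every compactly connected component of W
(maximal compactly connected subset of W) is unbounded. -/
theorem compactlyConnectedComponent_unbounded (W : Set (ℝ × ℝ)) (hW : IsClosed W)
    (hconn : IsConnected (((↑) '' W ∪ {∞} : Set (OnePoint (ℝ × ℝ)))))
    (C : Set (ℝ × ℝ)) (hCW : C ⊆ W) (hCne : C.Nonempty) (hCcc : CompactlyConnected C)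
    (hmax : ∀ C' : Set (ℝ × ℝ), C ⊆ C' → C' ⊆ W → CompactlyConnected C' → C' = C) :
    ¬ Bornology.IsBounded C := by
  intro hb
  obtain ⟨x₀, hx₀⟩ := hCne
  -- C is connected
  have hCconn : IsConnected C := by
    refine ⟨⟨x₀, hx₀⟩, isPreconnected_of_forall x₀ fun y hy => ?_⟩
    obtain ⟨K, hKC, _, hKconn, hxK, hyK⟩ := hCcc x₀ hx₀ y hy
    exact ⟨K, hKC, hxK, hyK, hKconn.isPreconnected⟩
  -- C is closed (by maximality) hence compact
  have hclC : closure C = C := by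
    refine hmax (closure C) subset_closure (hW.closure_subset_iff.2 hCW) ?_
    intro x hx y hy
    exact ⟨closure C, subset_rfl, hb.isCompact_closure, hCconn.closure, hx, hy⟩
  have hCcomp : IsCompact C := hclC ▸ hb.isCompact_closure
  -- C absorbs every compact connected subset of W meeting it
  have habs : ∀ K : Set (ℝ × ℝ), K ⊆ W → IsCompact K → IsConnected K →
      (K ∩ C).Nonempty → K ⊆ C := by
    intro K hKW hKc hKconn ⟨p, hpK, hpC⟩
    have hUconn : IsConnected (C ∪ K) := hCconn.union ⟨p, hpC, hpK⟩ hKconn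
    have hUcomp : IsCompact (C ∪ K) := hCcomp.union hKc
    have : C ∪ K = C := by
      refine hmax (C ∪ K) Set.subset_union_left (Set.union_subset hCW hKW) ?_
      intro x hx y hy
      exact ⟨C ∪ K, subset_rfl, hUcomp, hUconn, hx, hy⟩
    exact fun q hq => this ▸ Set.mem_union_right C hq
  -- choose a ball containing C
  obtain ⟨r, hr⟩ := hb.subset_closedBall 0
  set R : ℝ := max r 0 + 1 with hRdef
  have hCball : C ⊆ Metric.ball 0 R := hr.trans <| Metric.closedBall_subset_ball <| by
    have := le_max_left r 0; simp only [hRdef]; linarith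
  set U : Set (ℝ × ℝ) := W ∩ Metric.closedBall 0 R with hUdef
  have hUcomp : IsCompact U := (isCompact_closedBall 0 R).inter_left hW
  have hCU : C ⊆ U := fun p hp =>
    ⟨hCW hp, Metric.ball_subset_closedBall (hCball hp)⟩
  haveI : CompactSpace ↥U := isCompact_iff_compactSpace.mp hUcomp
  set xt : ↥U := ⟨x₀, hCU hx₀⟩ with hxtdef
  -- the connected component of x₀ in U is contained in C
  have hcompC : Subtype.val '' connectedComponent xt ⊆ C := by
    apply habs
    · exact fun q ⟨z, _, hz⟩ => hz ▸ z.2.1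
    · exact (isClosed_connectedComponent.isCompact).image continuous_subtype_val
    · exact isConnected_connectedComponent.image _ continuous_subtype_val.continuousOn
    · exact ⟨x₀, ⟨xt, mem_connectedComponent, rfl⟩, hx₀⟩
  -- separate it from the boundary region by a clopen set
  set B : Set ↥U := Subtype.val ⁻¹' (Metric.ball (0 : ℝ × ℝ) R)ᶜ with hBdef
  have hBcl : IsClosed B := Metric.isOpen_ball.isClosed_compl.preimage continuous_subtype_val
  have hdisj : Disjoint (connectedComponent xt) B := by
    rw [Set.disjoint_left]
    intro z hz hzB
    exact hzB (hCball (hcompC ⟨z, hz, rfl⟩))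
  obtain ⟨V', hV'clopen, hV'comp, hV'disj⟩ :=
    exists_isClopen_superset_connectedComponent_disjoint xt hBcl hdisj
  set V : Set (ℝ × ℝ) := Subtype.val '' V' with hVdef
  have hVcomp : IsCompact V :=
    (hV'clopen.1.isCompact).image continuous_subtype_val
  have hVU : V ⊆ U := fun q ⟨z, _, hz⟩ => hz ▸ z.2
  have hVball : V ⊆ Metric.ball 0 R := by
    rintro q ⟨z, hzV, rfl⟩
    by_contra h
    exact (Set.disjoint_left.1 hV'disj) hzV h
  -- C ⊆ V
  have hCV : C ⊆ V := by
    have h1 : C ⊆ connectedComponentIn U x₀ :=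
      hCconn.isPreconnected.subset_connectedComponentIn hx₀ hCU
    have h2 : connectedComponentIn U x₀ = Subtype.val '' connectedComponent xt :=
      connectedComponentIn_eq_image (hCU hx₀)
    exact fun p hp => Set.image_mono hV'comp (h2 ▸ h1 hp)
  -- V is the trace of an open set on W
  obtain ⟨O₀, hO₀open, hO₀⟩ := isOpen_induced_iff.1 hV'clopen.2
  have hVeq : V = O₀ ∩ U := by
    rw [hVdef, ← hO₀, Subtype.image_preimage_coe]
    exact Set.inter_comm _ _
  set O : Set (ℝ × ℝ) := O₀ ∩ Metric.ball 0 R with hOdef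
  have hOopen : IsOpen O := hO₀open.inter Metric.isOpen_ball
  have hVOW : V = O ∩ W := by
    apply Set.Subset.antisymm
    · intro q hq
      have hq' := hVeq ▸ hq
      exact ⟨⟨hq'.1, hVball hq⟩, hq'.2.1⟩
    · rintro q ⟨⟨hq1, hq2⟩, hqW⟩
      rw [hVeq]
      exact ⟨hq1, hqW, Metric.ball_subset_closedBall hq2⟩
  -- pass to the one-point compactification and contradict connectedness
  set S : Set (OnePoint (ℝ × ℝ)) := (↑) '' W ∪ {∞} with hSdef
  set u : Set (OnePoint (ℝ × ℝ)) := (↑) '' O with hudef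
  have huopen : IsOpen u := OnePoint.isOpenMap_coe O hOopen
  set T : Set (OnePoint (ℝ × ℝ)) := (↑) '' V with hTdef
  have hTcomp : IsCompact T := hVcomp.image OnePoint.continuous_coe
  have hvopen : IsOpen Tᶜ := hTcomp.isClosed.isOpen_compl
  have hScover : S ⊆ u ∪ Tᶜ := by
    intro s _
    by_cases hsT : s ∈ T
    · obtain ⟨p, hpV, rfl⟩ := hsT
      exact Or.inl ⟨p, (hVOW ▸ hpV).1, rfl⟩
    · exact Or.inr hsT
  have hSu : (S ∩ u).Nonempty := by
    refine ⟨(x₀ : OnePoint (ℝ × ℝ)), Or.inl ⟨x₀, hCW hx₀, rfl⟩, ⟨x₀, ?_, rfl⟩⟩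
    exact (hVOW ▸ hCV hx₀).1
  have hSv : (S ∩ Tᶜ).Nonempty :=
    ⟨∞, Or.inr rfl, OnePoint.infty_notMem_image_coe⟩
  obtain ⟨s, hsS, hsu, hsv⟩ := hconn.isPreconnected u Tᶜ huopen hvopen hScover hSu hSv
  obtain ⟨p, hpO, rfl⟩ := hsu
  rcases hsS with ⟨q, hqW, hq⟩ | hsinf
  · have hpq : q = p := OnePoint.coe_injective hq
    exact hsv ⟨p, hVOW ▸ ⟨hpO, hpq ▸ hqW⟩, rfl⟩
  · exact OnePoint.infty_ne_coe p hsinf.symm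
end
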